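/- Let f : ℝ → ℝ be twice continuously differentiable and suppose that for every u ∈ ℝ the integral ∫_{u}^{+∞} f'(t) e^{−t} dt converges absolutely; define m(u) = e^{u} ∫_{u}^{+∞} f'(t) e^{−t} dt. If m''(v) ≥ 0 for all v ∈ (v₁, +∞), then V(x) = m(v_L(x))·(x₁ − v_L(x)) + f(v_L(x)), with v_L(x) = x₁ − 1 + |x₂|, is a C¹-smooth diagonally concave function on Σ_L(v₁, +∞) = {x ∈ Σ : v_L(x) ≥ v₁}, satisfying (∂²V/∂x₁² + ∂²V/∂x₂²)² = 4(∂²V/∂x₁∂x₂)² at every interior point with x₂ ≠ 0. -/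

import Mathlib

open MeasureTheory Set

noncomputable section

/-- The horizontal strip `Σ = {x : |x₂| ≤ 1}`. -/
def SigmaSet : Set (ℝ × ℝ) := {x : ℝ × ℝ | |x.2| ≤ 1}

/-- The parabolic strip `Ω = {y : y₁² ≤ y₂ ≤ y₁² + 1}`. -/
def OmegaSet : Set (ℝ × ℝ) := {y : ℝ × ℝ | y.1 ^ 2 ≤ y.2 ∧ y.2 ≤ y.1 ^ 2 + 1}

/-- `G` is concave along the direction `(β, 1)` on the strip `Σ`:
for every `x ∈ Σ`, `t ↦ G(x₁ + βt, x₂ + t)` is concave on its domain. -/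
def ConcaveAlongDir (G : ℝ × ℝ → ℝ) (β : ℝ) : Prop :=
  ∀ x : ℝ × ℝ, x ∈ SigmaSet →
    ConcaveOn ℝ {t : ℝ | (x.1 + β * t, x.2 + t) ∈ SigmaSet}
      (fun t : ℝ => G (x.1 + β * t, x.2 + t))

/-- `G` is diagonally concave on `Σ`: concave along `(1,1)` and `(-1,1)`. -/
def DiagonallyConcave (G : ℝ × ℝ → ℝ) : Prop :=
  ConcaveAlongDir G 1 ∧ ConcaveAlongDir G (-1)

/-- `G` is concave along the direction `(β, 1)` within the set `S`. -/
def ConcaveAlongDirOn (G : ℝ × ℝ → ℝ) (β : ℝ) (S : Set (ℝ × ℝ)) : Prop :=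
  ∀ x ∈ S, ConcaveOn ℝ {t : ℝ | (x.1 + β * t, x.2 + t) ∈ S}
      (fun t : ℝ => G (x.1 + β * t, x.2 + t))

/-- `G` is diagonally concave on the set `S`. -/
def DiagConcaveOn (G : ℝ × ℝ → ℝ) (S : Set (ℝ × ℝ)) : Prop :=
  ConcaveAlongDirOn G 1 S ∧ ConcaveAlongDirOn G (-1) S

/-- `φ` is a simple martingale (finitely many values, eventually constant in `n`)
with terminal value `φI`. -/
def IsSimpleMartingaleWithLimit {Ω : Type} {m0 : MeasurableSpace Ω} (μ : Measure Ω)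
    (F : Filtration ℕ m0) (φ : ℕ → Ω → ℝ) (φI : Ω → ℝ) : Prop :=
  Martingale φ F μ ∧ (Set.range fun p : ℕ × Ω => φ p.1 p.2).Finite ∧
    ∃ N : ℕ, ∀ n : ℕ, N ≤ n → φ n = φI

/-- `ψ` is a martingale transform of `φ` by the predictable sequence `α`
(the multiplier `α n` used at step `n → n+1` is `F n`-measurable). -/
def IsMartingaleTransform {Ω : Type} {m0 : MeasurableSpace Ω} (μ : Measure Ω)
    (F : Filtration ℕ m0) (φ ψ α : ℕ → Ω → ℝ) : Prop :=
  Martingale ψ F μ ∧ (∀ n, Measurable[F n] (α n)) ∧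
    ∀ n : ℕ, ψ (n + 1) = fun ω => ψ n ω + α n ω * (φ (n + 1) ω - φ n ω)

/-- The values `𝔼 f(ψ∞)` over all simple martingales `φ` with `φ₀ = x₂`,
`‖φ∞‖_{L∞} ≤ 1` and all martingale transforms `ψ` of `φ` with `ψ₀ = x₁` by
predictable sequences with `‖α n‖_{L∞} ≤ 1`. -/
def UValues (f : ℝ → ℝ) (x : ℝ × ℝ) : Set EReal :=
  { r : EReal | ∃ (Ω : Type) (m0 : MeasurableSpace Ω) (μ : Measure Ω),
      IsProbabilityMeasure μ ∧
      ∃ (F : Filtration ℕ m0) (φ ψ α : ℕ → Ω → ℝ) (φI ψI : Ω → ℝ),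
        F 0 = ⊥ ∧
        IsSimpleMartingaleWithLimit μ F φ φI ∧
        IsSimpleMartingaleWithLimit μ F ψ ψI ∧
        IsMartingaleTransform μ F φ ψ α ∧
        φ 0 = (fun _ => x.2) ∧ ψ 0 = (fun _ => x.1) ∧
        (∀ n, ∀ᵐ ω ∂μ, |α n ω| ≤ 1) ∧
        (∀ᵐ ω ∂μ, |φI ω| ≤ 1) ∧
        r = ((∫ ω, f (ψI ω) ∂μ : ℝ) : EReal) }

/-- The Burkholder function `𝕌`. -/
def Ufun (f : ℝ → ℝ) (x : ℝ × ℝ) : EReal := sSup (UValues f x)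

/-- The values `𝔼 f(ψ∞)` over all simple martingales `φ` with `φ₀ = x₂`,
`|φ∞| = 1` a.s. and all martingale transforms `ψ` of `φ` with `ψ₀ = x₁` by
predictable sequences with `|α n| = 1` a.s. -/
def VValues (f : ℝ → ℝ) (x : ℝ × ℝ) : Set EReal :=
  { r : EReal | ∃ (Ω : Type) (m0 : MeasurableSpace Ω) (μ : Measure Ω),
      IsProbabilityMeasure μ ∧
      ∃ (F : Filtration ℕ m0) (φ ψ α : ℕ → Ω → ℝ) (φI ψI : Ω → ℝ),
        F 0 = ⊥ ∧
        IsSimpleMartingaleWithLimit μ F φ φI ∧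
        IsSimpleMartingaleWithLimit μ F ψ ψI ∧
        IsMartingaleTransform μ F φ ψ α ∧
        φ 0 = (fun _ => x.2) ∧ ψ 0 = (fun _ => x.1) ∧
        (∀ n, ∀ᵐ ω ∂μ, |α n ω| = 1) ∧
        (∀ᵐ ω ∂μ, |φI ω| = 1) ∧
        r = ((∫ ω, f (ψI ω) ∂μ : ℝ) : EReal) }

/-- The Burkholder function `𝕍`. -/
def Vfun (f : ℝ → ℝ) (x : ℝ × ℝ) : EReal := sSup (VValues f x)

/-- `‖ζ‖_BMO ≤ 1` in the quadratic sense: for every subinterval of `[0,1]`,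
the average of `|ζ - ⟨ζ⟩_I|²` over `I` is at most `1`. -/
def BMOleOne (ζ : ℝ → ℝ) : Prop :=
  ∀ c d : ℝ, 0 ≤ c → c < d → d ≤ 1 →
    (∫ t in Set.Ioc c d, (ζ t - (d - c)⁻¹ * ∫ s in Set.Ioc c d, ζ s) ^ 2) ≤ d - c

/-- The values `∫₀¹ f(ζ)` over summable `ζ` with `⟨ζ⟩ = y₁`, `⟨ζ²⟩ = y₂`,
`‖ζ‖_BMO ≤ 1`. -/
def BValues (f : ℝ → ℝ) (y : ℝ × ℝ) : Set EReal :=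
  { r : EReal | ∃ ζ : ℝ → ℝ,
      IntegrableOn ζ (Set.Icc 0 1) ∧
      IntegrableOn (fun t => ζ t ^ 2) (Set.Icc 0 1) ∧
      (∫ t in Set.Icc (0:ℝ) 1, ζ t) = y.1 ∧
      (∫ t in Set.Icc (0:ℝ) 1, ζ t ^ 2) = y.2 ∧
      BMOleOne ζ ∧
      IntegrableOn (fun t => f (ζ t)) (Set.Icc 0 1) ∧
      r = ((∫ t in Set.Icc (0:ℝ) 1, f (ζ t) : ℝ) : EReal) }

/-- The Bellman function `𝔹 = 𝔹₁` for BMO. -/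
def Bfun (f : ℝ → ℝ) (y : ℝ × ℝ) : EReal := sSup (BValues f y)

def vR (x : ℝ × ℝ) : ℝ := x.1 + 1 - |x.2|

def vL (x : ℝ × ℝ) : ℝ := x.1 - 1 + |x.2|

def SigmaR (v₁ v₂ : ℝ) : Set (ℝ × ℝ) := {x : ℝ × ℝ | x ∈ SigmaSet ∧ vR x ∈ Set.Icc v₁ v₂}

def SigmaL (v₁ v₂ : ℝ) : Set (ℝ × ℝ) := {x : ℝ × ℝ | x ∈ SigmaSet ∧ vL x ∈ Set.Icc v₁ v₂}

def SigmaRle (v₂ : ℝ) : Set (ℝ × ℝ) := {x : ℝ × ℝ | x ∈ SigmaSet ∧ vR x ≤ v₂}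

def SigmaLge (v₁ : ℝ) : Set (ℝ × ℝ) := {x : ℝ × ℝ | x ∈ SigmaSet ∧ v₁ ≤ vL x}

/-- `∂²V/∂x₁²`. -/
def p11 (V : ℝ × ℝ → ℝ) (x : ℝ × ℝ) : ℝ :=
  deriv (fun s => deriv (fun u => V (u, x.2)) s) x.1

/-- `∂²V/∂x₂²`. -/
def p22 (V : ℝ × ℝ → ℝ) (x : ℝ × ℝ) : ℝ :=
  deriv (fun s => deriv (fun u => V (x.1, u)) s) x.2

/-- `∂²V/∂x₁∂x₂`. -/
def p12 (V : ℝ × ℝ → ℝ) (x : ℝ × ℝ) : ℝ :=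
  deriv (fun s => deriv (fun u => V (u, s)) x.1) x.2

/-- The equation `(V₁₁ + V₂₂)² = 4 V₁₂²` at the point `x`. -/
def SolvesStrangeEq (V : ℝ × ℝ → ℝ) (x : ℝ × ℝ) : Prop :=
  (p11 V x + p22 V x) ^ 2 = 4 * p12 V x ^ 2

/-- `a` is an atom of the σ-algebra `m` with respect to `μ`. -/
def IsAtomOf {Ω : Type} {m0 : MeasurableSpace Ω} (μ : Measure Ω) (m : MeasurableSpace Ω)
    (a : Set Ω) : Prop :=
  MeasurableSet[m] a ∧ 0 < μ a ∧
    ∀ b : Set Ω, MeasurableSet[m] b → b ⊆ a → μ b = 0 ∨ μ (a \ b) = 0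

/-- `g` is piecewise monotone with finitely many monotonicity intervals. -/
def PiecewiseMonotone (g : ℝ → ℝ) : Prop :=
  ∃ s : Finset ℝ, ∀ a b : ℝ, a < b → (∀ c ∈ s, c ∉ Set.Ioo a b) →
    MonotoneOn g (Set.Ioo a b) ∨ AntitoneOn g (Set.Ioo a b)

/-- `∫ e^{-|t|/ε} |dg(t)| < ∞`: `g` is a difference of two monotone (Stieltjes)
functions whose total variation measure integrates `e^{-|t|/ε}`. -/
def FinWeightedVar (g : ℝ → ℝ) (ε : ℝ) : Prop :=
  ∃ G H : StieltjesFunction ℝ, (∀ t, g t = G t - H t) ∧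
    (∫⁻ t : ℝ, ENNReal.ofReal (Real.exp (-|t| / ε)) ∂(G.measure + H.measure)) < ⊤

/-- The vertical-herringbone domain `Σ_hrb([a₀,b₀],[a₁,b₁])` (lower half). -/
def SigmaHrb (a b : ℝ → ℝ) (ℓ₁ ℓ₀ : ℝ) : Set (ℝ × ℝ) :=
  {x : ℝ × ℝ | |x.2| ≤ 1 ∧ x.2 ≤ 0 ∧
    (b ℓ₁ - a ℓ₁) / 2 - |x.1 - (a ℓ₁ + b ℓ₁) / 2| ≤ x.2 + 1 ∧
    x.2 + 1 ≤ (b ℓ₀ - a ℓ₀) / 2 - |x.1 - (a ℓ₀ + b ℓ₀) / 2|}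



namespace St12

lemma hasDerivAt_I {g : ℝ → ℝ} (hgc : Continuous g)
    (hint : ∀ u : ℝ, MeasureTheory.IntegrableOn g (Set.Ici u)) (u : ℝ) :
    HasDerivAt (fun u => ∫ t in Set.Ici u, g t) (-(g u)) u := by
  have hsplit : ∀ v : ℝ, (∫ t in Set.Ici v, g t)
      = (∫ t in Set.Ici (0:ℝ), g t) - ∫ t in (0:ℝ)..v, g t := by
    intro v
    have key : ∀ a b : ℝ, a ≤ b → (∫ t in Set.Ici a, g t)
        = (∫ t in a..b, g t) + ∫ t in Set.Ici b, g t := by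
      intro a b hab
      rw [intervalIntegral.integral_of_le hab, MeasureTheory.integral_Ici_eq_integral_Ioi,
        MeasureTheory.integral_Ici_eq_integral_Ioi,
        ← MeasureTheory.setIntegral_union (Set.Ioc_disjoint_Ioi le_rfl) measurableSet_Ioi
          (((hint a).mono_set Set.Ioi_subset_Ici_self).mono_set Set.Ioc_subset_Ioi_self)
          ((hint b).mono_set Set.Ioi_subset_Ici_self),
        Set.Ioc_union_Ioi_eq_Ioi hab]
    rcases le_total 0 v with h | h
    · have := key 0 v h; linarith
    · have := key v 0 h
      rw [intervalIntegral.integral_symm]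
      linarith
  have h1 : HasDerivAt (fun v => (∫ t in Set.Ici (0:ℝ), g t) - ∫ t in (0:ℝ)..v, g t)
      (-(g u)) u := by
    have h2 : HasDerivAt (fun v => ∫ t in (0:ℝ)..v, g t) (g u) u :=
      intervalIntegral.integral_hasDerivAt_right (hgc.intervalIntegrable _ _)
        hgc.stronglyMeasurable.stronglyMeasurableAtFilter hgc.continuousAt
    exact ((hasDerivAt_const u _).sub h2).congr_deriv (by simp)
  have h3 : (fun v => ∫ t in Set.Ici v, g t)
      = fun v => (∫ t in Set.Ici (0:ℝ), g t) - ∫ t in (0:ℝ)..v, g t := funext hsplit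
  rw [h3]; exact h1

lemma hasDerivAt_m {f m : ℝ → ℝ} (hfc : Continuous (deriv f))
    (hint : ∀ u : ℝ, MeasureTheory.IntegrableOn
      (fun t => deriv f t * Real.exp (-t)) (Set.Ici u))
    (hm : ∀ u : ℝ, m u = Real.exp u * ∫ t in Set.Ici u, deriv f t * Real.exp (-t)) (u : ℝ) :
    HasDerivAt m (m u - deriv f u) u := by
  set g : ℝ → ℝ := fun t => deriv f t * Real.exp (-t) with hg
  have hgc : Continuous g := hfc.mul (Real.continuous_exp.comp continuous_neg)
  have hI : HasDerivAt (fun u => ∫ t in Set.Ici u, g t) (-(g u)) u := hasDerivAt_I hgc hint u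
  have h2 : HasDerivAt (fun u => Real.exp u * ∫ t in Set.Ici u, g t)
      (Real.exp u * (∫ t in Set.Ici u, g t) + Real.exp u * (-(g u))) u :=
    (Real.hasDerivAt_exp u).mul hI
  have h3 : (fun u => Real.exp u * ∫ t in Set.Ici u, g t) = m := funext fun v => (hm v).symm
  rw [h3] at h2
  convert h2 using 1
  rw [hm u, hg]
  simp only
  rw [Real.exp_neg]
  field_simp
  ring

variable {f m m1 m2 : ℝ → ℝ}

def Vf (f m : ℝ → ℝ) : ℝ × ℝ → ℝ := fun x => m (vL x) * (x.1 - vL x) + f (vL x)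

def Phi (f m : ℝ → ℝ) : ℝ × ℝ → ℝ :=
  fun p => m (p.1 - 1 + p.2) * (1 - p.2) + f (p.1 - 1 + p.2)

lemma Vf_eq (f m : ℝ → ℝ) (x : ℝ × ℝ) : Vf f m x = Phi f m (x.1, |x.2|) := by
  simp only [Vf, Phi, vL]; ring_nf

lemma Vf_symm (f m : ℝ → ℝ) (x₁ x₂ : ℝ) : Vf f m (x₁, -x₂) = Vf f m (x₁, x₂) := by
  simp [Vf, vL]

open ContinuousLinearMap in
lemma hasFDerivAt_Phi (hm1 : ∀ u, HasDerivAt m (m1 u) u)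
    (hfd : ∀ u, HasDerivAt f (m u - m1 u) u) (p : ℝ × ℝ) :
    HasFDerivAt (Phi f m)
      ((m (p.1 - 1 + p.2) - p.2 * m1 (p.1 - 1 + p.2)) • (fst ℝ ℝ ℝ)
        + (-(p.2 * m1 (p.1 - 1 + p.2))) • (snd ℝ ℝ ℝ)) p := by
  set w := p.1 - 1 + p.2 with hw
  have hq : HasFDerivAt (fun p : ℝ × ℝ => p.1 - 1 + p.2)
      ((fst ℝ ℝ ℝ) + (snd ℝ ℝ ℝ)) p := by
    exact ((hasFDerivAt_fst (p := p)).sub_const 1).add (hasFDerivAt_snd (p := p))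
  have h1 : HasFDerivAt (fun q : ℝ × ℝ => m (q.1 - 1 + q.2))
      (m1 w • ((fst ℝ ℝ ℝ) + (snd ℝ ℝ ℝ))) p := (hm1 w).comp_hasFDerivAt p hq
  have h2 : HasFDerivAt (fun q : ℝ × ℝ => f (q.1 - 1 + q.2))
      ((m w - m1 w) • ((fst ℝ ℝ ℝ) + (snd ℝ ℝ ℝ))) p := (hfd w).comp_hasFDerivAt p hq
  have h3 : HasFDerivAt (fun q : ℝ × ℝ => 1 - q.2)
      ((0 : ℝ × ℝ →L[ℝ] ℝ) - (snd ℝ ℝ ℝ)) p :=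
    (hasFDerivAt_const (1:ℝ) p).sub (hasFDerivAt_snd (p := p))
  have h4 := (h1.mul h3).add h2
  refine h4.congr_fderiv ?_
  apply ContinuousLinearMap.ext
  rintro ⟨a, b⟩
  simp only [ContinuousLinearMap.add_apply, ContinuousLinearMap.smul_apply,
    ContinuousLinearMap.coe_fst', ContinuousLinearMap.coe_snd',
    ContinuousLinearMap.sub_apply, ContinuousLinearMap.zero_apply, smul_eq_mul]
  ring

open ContinuousLinearMap in
def LVf (m m1 : ℝ → ℝ) (x : ℝ × ℝ) : ℝ × ℝ →L[ℝ] ℝ :=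
  (m (vL x) - |x.2| * m1 (vL x)) • (fst ℝ ℝ ℝ) + (-(x.2 * m1 (vL x))) • (snd ℝ ℝ ℝ)

lemma LVf_apply (m m1 : ℝ → ℝ) (x v : ℝ × ℝ) :
    LVf m m1 x v = (m (vL x) - |x.2| * m1 (vL x)) * v.1 + (-(x.2 * m1 (vL x))) * v.2 := by
  simp [LVf]

lemma hasFDerivAt_Vf (hm1 : ∀ u, HasDerivAt m (m1 u) u)
    (hfd : ∀ u, HasDerivAt f (m u - m1 u) u) (x : ℝ × ℝ) :
    HasFDerivAt (Vf f m) (LVf m m1 x) x := by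
  rcases lt_trichotomy x.2 0 with hx2 | hx2 | hx2
  · set R : ℝ × ℝ →L[ℝ] ℝ × ℝ := (ContinuousLinearMap.fst ℝ ℝ ℝ).prod
      (-(ContinuousLinearMap.snd ℝ ℝ ℝ)) with hR
    have hRx : ∀ y : ℝ × ℝ, R y = (y.1, -y.2) := fun y => rfl
    have hcomp : HasFDerivAt (fun y => Phi f m (R y))
        (((m ((R x).1 - 1 + (R x).2) - (R x).2 * m1 ((R x).1 - 1 + (R x).2)) •
          (ContinuousLinearMap.fst ℝ ℝ ℝ)
          + (-((R x).2 * m1 ((R x).1 - 1 + (R x).2))) •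
            (ContinuousLinearMap.snd ℝ ℝ ℝ)).comp R) x :=
      (hasFDerivAt_Phi hm1 hfd (R x)).comp x R.hasFDerivAt
    have hev : Vf f m =ᶠ[nhds x] fun y => Phi f m (R y) := by
      have : ∀ᶠ y : ℝ × ℝ in nhds x, y.2 < 0 :=
        (continuous_snd.continuousAt (x := x)).eventually_lt_const hx2
      filter_upwards [this] with y hy
      rw [Vf_eq, hRx, abs_of_neg hy]
    have hmain := hcomp.congr_of_eventuallyEq hev
    convert hmain using 1
    apply ContinuousLinearMap.ext
    rintro ⟨a, b⟩
    have hv : vL x = x.1 - 1 + -x.2 := by rw [vL, abs_of_neg hx2]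
    simp only [LVf, hRx, ContinuousLinearMap.add_apply, ContinuousLinearMap.smul_apply,
      ContinuousLinearMap.coe_fst', ContinuousLinearMap.coe_snd',
      ContinuousLinearMap.comp_apply, ContinuousLinearMap.prod_apply,
      ContinuousLinearMap.neg_apply, smul_eq_mul, hv, abs_of_neg hx2]
    ring
  · have hD := hasFDerivAt_Phi hm1 hfd (x.1, (0:ℝ))
    rw [hasFDerivAt_iff_isLittleO_nhds_zero] at hD ⊢
    have key : ∀ h : ℝ × ℝ, Vf f m (x + h) =
        Phi f m ((x.1, (0:ℝ)) + (h.1, |h.2|)) := by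
      intro h
      rw [Vf_eq]
      congr 1
      simp [Prod.ext_iff, hx2]
    have hA : Filter.Tendsto (fun h : ℝ × ℝ => ((h.1, |h.2|) : ℝ × ℝ)) (nhds 0) (nhds 0) := by
      have hc : Continuous fun h : ℝ × ℝ => ((h.1, |h.2|) : ℝ × ℝ) :=
        continuous_fst.prodMk continuous_snd.abs
      convert hc.tendsto 0 using 2
      ext <;> simp
    have h1 := hD.comp_tendsto hA
    have h2 : (fun h : ℝ × ℝ => ((h.1, |h.2|) : ℝ × ℝ)) =O[nhds 0] (fun h : ℝ × ℝ => h) := by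
      apply Asymptotics.IsBigO.of_bound 1
      filter_upwards with h
      simp [Prod.norm_def]
    have h3 := h1.trans_isBigO h2
    refine h3.congr (fun h => ?_) (fun h => rfl)
    show Phi f m ((x.1, (0:ℝ)) + ((h.1, |h.2|) : ℝ × ℝ)) - Phi f m (x.1, 0) - _ =
      Vf f m (x + h) - Vf f m x - LVf m m1 x h
    rw [key h, Vf_eq]
    have hvx : vL x = x.1 - 1 := by rw [vL, hx2]; simp
    simp only [hx2, abs_zero, LVf_apply, hvx,
      ContinuousLinearMap.add_apply, ContinuousLinearMap.smul_apply,
      ContinuousLinearMap.coe_fst', ContinuousLinearMap.coe_snd', smul_eq_mul]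
    ring_nf
  · have hcomp := hasFDerivAt_Phi hm1 hfd x
    have hev : Vf f m =ᶠ[nhds x] Phi f m := by
      have : ∀ᶠ y : ℝ × ℝ in nhds x, 0 < y.2 :=
        (continuous_snd.continuousAt (x := x)).eventually_const_lt hx2
      filter_upwards [this] with y hy
      rw [Vf_eq, abs_of_pos hy]
    have hmain := hcomp.congr_of_eventuallyEq hev
    convert hmain using 2 <;>
      simp only [LVf, vL, abs_of_pos hx2]

lemma contDiff_Vf (hm1 : ∀ u, HasDerivAt m (m1 u) u)
    (hfd : ∀ u, HasDerivAt f (m u - m1 u) u) (hm1c : Continuous m1) :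
    ContDiff ℝ 1 (Vf f m) := by
  rw [contDiff_one_iff_fderiv]
  refine ⟨fun x => (hasFDerivAt_Vf hm1 hfd x).differentiableAt, ?_⟩
  have h : (fun x => fderiv ℝ (Vf f m) x) = fun x => LVf m m1 x :=
    funext fun x => (hasFDerivAt_Vf hm1 hfd x).fderiv
  show Continuous fun x => fderiv ℝ (Vf f m) x
  rw [h]
  have hmc : Continuous m :=
    (Differentiable.continuous fun u => (hm1 u).differentiableAt : Continuous m)
  have hvL : Continuous vL := by
    unfold vL
    exact (continuous_fst.sub continuous_const).add continuous_snd.abs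
  unfold LVf
  apply Continuous.add
  · exact ((hmc.comp hvL).sub (continuous_snd.abs.mul (hm1c.comp hvL))).smul
      continuous_const
  · exact ((continuous_snd.mul (hm1c.comp hvL)).neg).smul continuous_const

lemma hasDerivAt_line (hm1 : ∀ u, HasDerivAt m (m1 u) u)
    (hfd : ∀ u, HasDerivAt f (m u - m1 u) u) (x : ℝ × ℝ) (t : ℝ) :
    HasDerivAt (fun t => Vf f m (x.1 + t, x.2 + t))
      (m (x.1 + t - 1 + |x.2 + t|)
        - (|x.2 + t| + (x.2 + t)) * m1 (x.1 + t - 1 + |x.2 + t|)) t := by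
  have hl : HasDerivAt (fun t : ℝ => ((x.1 + t, x.2 + t) : ℝ × ℝ)) (1, 1) t :=
    ((hasDerivAt_id t).const_add x.1).prodMk ((hasDerivAt_id t).const_add x.2)
  have h := (hasFDerivAt_Vf hm1 hfd (x.1 + t, x.2 + t)).comp_hasDerivAt t hl
  refine h.congr_deriv ?_
  rw [LVf_apply]
  simp only [vL]
  ring

lemma convex_S (v₁ : ℝ) (x : ℝ × ℝ) (β : ℝ) (hβ : β = 1 ∨ β = -1) :
    Convex ℝ {t : ℝ | (x.1 + β * t, x.2 + t) ∈ SigmaLge v₁} := by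
  rw [convex_iff_ordConnected]
  constructor
  intro t₀ h₀ t₁ h₁ t ht
  simp only [SigmaLge, SigmaSet, vL, Set.mem_setOf_eq] at h₀ h₁ ⊢
  obtain ⟨ht₀, ht₁⟩ := ht
  obtain ⟨h₀1, h₀2⟩ := h₀
  obtain ⟨h₁1, h₁2⟩ := h₁
  rw [abs_le] at h₀1 h₁1
  constructor
  · rw [abs_le]
    constructor <;> linarith
  · rcases hβ with hβ | hβ <;> subst hβ
    · have key : |x.2 + t₀| - |x.2 + t| ≤ |x.2 + t₀ - (x.2 + t)| :=
        abs_sub_abs_le_abs_sub _ _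
      have h2 : |x.2 + t₀ - (x.2 + t)| = t - t₀ := by
        rw [show x.2 + t₀ - (x.2 + t) = t₀ - t by ring,
          abs_of_nonpos (by linarith)]; ring
      rw [h2] at key; linarith
    · have key : |x.2 + t₁| - |x.2 + t| ≤ |x.2 + t₁ - (x.2 + t)| :=
        abs_sub_abs_le_abs_sub _ _
      have h2 : |x.2 + t₁ - (x.2 + t)| = t₁ - t := by
        rw [show x.2 + t₁ - (x.2 + t) = t₁ - t by ring,
          abs_of_nonneg (by linarith)]
      rw [h2] at key; linarith

lemma concave_line1 (hm1 : ∀ u, HasDerivAt m (m1 u) u) (hm2 : ∀ u, HasDerivAt m1 (m2 u) u)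
    (hfd : ∀ u, HasDerivAt f (m u - m1 u) u) (hm2c : Continuous m2)
    {v₁ : ℝ} (hcc : ∀ v, v₁ < v → 0 ≤ m2 v) (x : ℝ × ℝ) :
    ConcaveOn ℝ {t : ℝ | (x.1 + 1 * t, x.2 + t) ∈ SigmaLge v₁}
      (fun t => Vf f m (x.1 + 1 * t, x.2 + t)) := by
  simp only [one_mul]
  set S := {t : ℝ | (x.1 + t, x.2 + t) ∈ SigmaLge v₁} with hS
  have hSconv : Convex ℝ S := by
    have := convex_S v₁ x 1 (Or.inl rfl)
    simpa only [one_mul] using this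
  set φ : ℝ → ℝ := fun t => m (x.1 + t - 1 + |x.2 + t|)
      - (|x.2 + t| + (x.2 + t)) * m1 (x.1 + t - 1 + |x.2 + t|) with hφ
  have hg : ∀ t, HasDerivAt (fun t => Vf f m (x.1 + t, x.2 + t)) (φ t) t :=
    hasDerivAt_line hm1 hfd x
  have hderiv : deriv (fun t => Vf f m (x.1 + t, x.2 + t)) = φ :=
    funext fun t => (hg t).deriv
  apply AntitoneOn.concaveOn_of_deriv hSconv
  · exact Continuous.continuousOn
      (Differentiable.continuous fun t => (hg t).differentiableAt)
  · exact fun t _ => (hg t).differentiableAt.differentiableWithinAt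
  · rw [hderiv]
    have hIconv : Convex ℝ (interior S) := hSconv.interior
    have claimA : ∀ t ∈ interior S, 0 < x.2 + t → v₁ < x.1 + x.2 - 1 + 2 * t := by
      intro t ht hs
      obtain ⟨ε, hε, hball⟩ := Metric.isOpen_iff.mp isOpen_interior t ht
      set δ := min (ε / 2) ((x.2 + t) / 2) with hδ
      have hδ0 : 0 < δ := lt_min (by linarith) (by linarith)
      have hδ1 : δ ≤ ε / 2 := min_le_left _ _
      have hδ2 : δ ≤ (x.2 + t) / 2 := min_le_right _ _
      have h1 : t - δ ∈ S := interior_subset (hball (by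
        rw [Metric.mem_ball, Real.dist_eq, show t - δ - t = -δ by ring, abs_neg,
          abs_of_pos hδ0]
        linarith))
      simp only [hS, SigmaLge, SigmaSet, vL, Set.mem_setOf_eq] at h1
      have h2 : 0 < x.2 + (t - δ) := by linarith
      have h3 := h1.2
      rw [abs_of_pos h2] at h3
      linarith
    have pieceC : ∀ t, x.2 + t ≤ 0 → φ t = m (x.1 - x.2 - 1) := by
      intro t ht
      simp only [hφ]
      rw [abs_of_nonpos ht, show x.1 + t - 1 + -(x.2 + t) = x.1 - x.2 - 1 by ring]
      ring
    set c := x.1 + x.2 - 1 with hc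
    set φp : ℝ → ℝ := fun t => m (c + 2 * t) - 2 * (x.2 + t) * m1 (c + 2 * t) with hφp
    have hφpd : ∀ t, HasDerivAt φp (-(4 * (x.2 + t) * m2 (c + 2 * t))) t := by
      intro t
      have hin : HasDerivAt (fun t : ℝ => c + 2 * t) 2 t := by
        simpa using ((hasDerivAt_id t).const_mul 2).const_add c
      have h1 : HasDerivAt (fun t => m (c + 2 * t)) (m1 (c + 2 * t) * 2) t :=
        (hm1 _).comp t hin
      have h2 : HasDerivAt (fun t => m1 (c + 2 * t)) (m2 (c + 2 * t) * 2) t :=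
        (hm2 _).comp t hin
      have h3 : HasDerivAt (fun t : ℝ => 2 * (x.2 + t)) 2 t := by
        simpa using ((hasDerivAt_id t).const_add x.2).const_mul 2
      have h4 := h1.sub (h3.mul h2)
      refine h4.congr_deriv ?_
      ring
    have hEconv : Convex ℝ (interior S ∩ Set.Ici (-x.2)) := hIconv.inter (convex_Ici _)
    have hBp : AntitoneOn φp (interior S ∩ Set.Ici (-x.2)) := by
      apply antitoneOn_of_deriv_nonpos hEconv
      · exact Continuous.continuousOn
          (Differentiable.continuous fun t => (hφpd t).differentiableAt)
      · exact fun t _ => (hφpd t).differentiableAt.differentiableWithinAt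
      · intro t ht
        rw [interior_inter, interior_interior, interior_Ici] at ht
        have hs : 0 < x.2 + t := by
          have := ht.2; rw [Set.mem_Ioi] at this; linarith
        have hv := claimA t ht.1 hs
        rw [(hφpd t).deriv]
        have hm2nn : 0 ≤ m2 (c + 2 * t) := hcc _ (by rw [hc]; linarith)
        nlinarith
    have pieceB : AntitoneOn φ (interior S ∩ Set.Ici (-x.2)) := by
      intro a ha b hb hab
      have he : ∀ u ∈ interior S ∩ Set.Ici (-x.2), φ u = φp u := by
        intro u hu
        have hs : 0 ≤ x.2 + u := by
          have := hu.2; rw [Set.mem_Ici] at this; linarith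
        simp only [hφ, hφp]
        rw [abs_of_nonneg hs, show x.1 + u - 1 + (x.2 + u) = c + 2 * u by rw [hc]; ring]
        ring
      rw [he a ha, he b hb]
      exact hBp ha hb hab
    intro a ha b hb hab
    rcases le_total b (-x.2) with hb2 | hb2
    · rw [pieceC a (by linarith), pieceC b (by linarith)]
    · rcases le_total (-x.2) a with ha2 | ha2
      · exact pieceB ⟨ha, ha2⟩ ⟨hb, hb2⟩ hab
      · have hmem : -x.2 ∈ interior S :=
          hIconv.ordConnected.out ha hb ⟨ha2, hb2⟩
        rw [pieceC a (by linarith), ← pieceC (-x.2) (by linarith)]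
        exact pieceB ⟨hmem, Set.self_mem_Ici⟩ ⟨hb, hb2⟩ hb2

lemma concave_lineNeg (hm1 : ∀ u, HasDerivAt m (m1 u) u) (hm2 : ∀ u, HasDerivAt m1 (m2 u) u)
    (hfd : ∀ u, HasDerivAt f (m u - m1 u) u) (hm2c : Continuous m2)
    {v₁ : ℝ} (hcc : ∀ v, v₁ < v → 0 ≤ m2 v) (x : ℝ × ℝ) :
    ConcaveOn ℝ {t : ℝ | (x.1 + (-1) * t, x.2 + t) ∈ SigmaLge v₁}
      (fun t => Vf f m (x.1 + (-1) * t, x.2 + t)) := by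
  have h1 := concave_line1 hm1 hm2 hfd hm2c hcc (x.1, -x.2)
  set ν : ℝ →ᵃ[ℝ] ℝ := LinearMap.toAffineMap (-LinearMap.id) with hν
  have hν' : ∀ t : ℝ, ν t = -t := fun t => rfl
  have h2 := h1.comp_affineMap ν
  have hset : ν ⁻¹' {t : ℝ | ((x.1, -x.2).1 + 1 * t, (x.1, -x.2).2 + t) ∈ SigmaLge v₁}
      = {t : ℝ | (x.1 + (-1) * t, x.2 + t) ∈ SigmaLge v₁} := by
    ext t
    simp only [Set.mem_preimage, hν', Set.mem_setOf_eq, one_mul]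
    simp only [SigmaLge, SigmaSet, vL, Set.mem_setOf_eq]
    rw [show x.1 + -t = x.1 + (-1) * t by ring,
      show -x.2 + -t = -(x.2 + t) by ring, abs_neg]
  have hfun : ∀ t : ℝ, ((fun t => Vf f m ((x.1, -x.2).1 + 1 * t, (x.1, -x.2).2 + t)) ∘ ν) t
      = Vf f m (x.1 + (-1) * t, x.2 + t) := by
    intro t
    simp only [Function.comp_apply, hν', one_mul]
    rw [show -x.2 + -t = -(x.2 + t) by ring, Vf_symm,
      show x.1 + -t = x.1 + (-1) * t by ring]
  rw [hset] at h2
  have hfe : ((fun t => Vf f m ((x.1, -x.2).1 + 1 * t, (x.1, -x.2).2 + t)) ∘ ν)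
      = fun t => Vf f m (x.1 + (-1) * t, x.2 + t) := funext hfun
  rwa [hfe] at h2
lemma H1 {k k' : ℝ → ℝ} (hk : ∀ u, HasDerivAt k (k' u) u) (b s : ℝ) :
    HasDerivAt (fun u => k (u - 1 + b)) (k' (s - 1 + b)) s := by
  have := (hk (s - 1 + b)).comp s (((hasDerivAt_id s).sub_const 1).add_const b)
  simpa [Function.comp_def] using this

lemma H2 {k k' : ℝ → ℝ} (hk : ∀ u, HasDerivAt k (k' u) u) (b s : ℝ) :
    HasDerivAt (fun u => k (b - 1 + u)) (k' (b - 1 + s)) s := by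
  have := (hk (b - 1 + s)).comp s ((hasDerivAt_id s).const_add (b - 1))
  simpa [Function.comp_def] using this

lemma H4 {k k' : ℝ → ℝ} (hk : ∀ u, HasDerivAt k (k' u) u) (b s : ℝ) :
    HasDerivAt (fun u => k (b - 1 + -u)) (-k' (b - 1 + -s)) s := by
  have := (hk (b - 1 + -s)).comp s ((hasDerivAt_id s).neg.const_add (b - 1))
  simpa [mul_comm, Function.comp_def] using this

lemma strange_eq (hm1 : ∀ u, HasDerivAt m (m1 u) u) (hm2 : ∀ u, HasDerivAt m1 (m2 u) u)
    (hfd : ∀ u, HasDerivAt f (m u - m1 u) u) (x : ℝ × ℝ) (hx : x.2 ≠ 0) :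
    SolvesStrangeEq (Vf f m) x := by
  rcases hx.lt_or_gt with hx2 | hx2
  · -- x.2 < 0
    set w := x.1 - 1 + -x.2 with hw
    have hinner : ∀ s : ℝ, s < 0 → (fun u => Vf f m (u, s)) =
        fun u => m (u - 1 + -s) * (1 + s) + f (u - 1 + -s) := by
      intro s hs
      funext u
      simp only [Vf, vL, abs_of_neg hs]
      rw [show u - (u - 1 + -s) = 1 + s by ring]
    have hp11 : p11 (Vf f m) x = m2 w * (1 + x.2) + (m1 w - m2 w) := by
      rw [p11]
      have hQ : (fun s => deriv (fun u => Vf f m (u, x.2)) s) = fun s =>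
          m1 (s - 1 + -x.2) * (1 + x.2) + (m (s - 1 + -x.2) - m1 (s - 1 + -x.2)) := by
        funext s
        rw [hinner x.2 hx2]
        exact (((H1 hm1 (-x.2) s).mul_const (1 + x.2)).add (H1 hfd (-x.2) s)).deriv
      rw [hQ]
      exact (((H1 hm2 (-x.2) x.1).mul_const (1 + x.2)).add
        ((H1 hm1 (-x.2) x.1).sub (H1 hm2 (-x.2) x.1))).deriv
    have hp22 : p22 (Vf f m) x = -(m1 w - x.2 * m2 w) := by
      rw [p22]
      have hev : (fun s => deriv (fun u => Vf f m (x.1, u)) s) =ᶠ[nhds x.2]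
          fun s => -(s * m1 (x.1 - 1 + -s)) := by
        filter_upwards [isOpen_Iio.eventually_mem hx2] with s hs
        have hloc : (fun u => Vf f m (x.1, u)) =ᶠ[nhds s]
            fun u => m (x.1 - 1 + -u) * (1 + u) + f (x.1 - 1 + -u) := by
          filter_upwards [isOpen_Iio.eventually_mem hs] with u hu
          simp only [Vf, vL, abs_of_neg (mem_Iio.mp hu)]
          rw [show x.1 - (x.1 - 1 + -u) = 1 + u by ring]
        rw [hloc.deriv_eq]
        have hN : HasDerivAt (fun u => m (x.1 - 1 + -u) * (1 + u) + f (x.1 - 1 + -u))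
            (-(s * m1 (x.1 - 1 + -s))) s := by
          have h1 := (H4 hm1 x.1 s).mul ((hasDerivAt_const s (1 : ℝ)).add (hasDerivAt_id' s))
          have h2 := H4 hfd x.1 s
          have h3 := h1.add h2
          refine h3.congr_deriv ?_
          simp only [Pi.add_apply]
          ring
        exact hN.deriv
      rw [hev.deriv_eq]
      have hD : HasDerivAt (fun s => -(s * m1 (x.1 - 1 + -s))) (-(m1 w - x.2 * m2 w)) x.2 := by
        have h1 := ((hasDerivAt_id' x.2).mul (H4 hm2 x.1 x.2)).neg
        refine h1.congr_deriv ?_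
        rw [hw]; ring
      exact hD.deriv
    have hp12 : p12 (Vf f m) x = -(x.2 * m2 w) := by
      rw [p12]
      have hev : (fun s => deriv (fun u => Vf f m (u, s)) x.1) =ᶠ[nhds x.2]
          fun s => m1 (x.1 - 1 + -s) * (1 + s) + (m (x.1 - 1 + -s) - m1 (x.1 - 1 + -s)) := by
        filter_upwards [isOpen_Iio.eventually_mem hx2] with s hs
        rw [hinner s hs]
        exact (((H1 hm1 (-s) x.1).mul_const (1 + s)).add (H1 hfd (-s) x.1)).deriv
      rw [hev.deriv_eq]
      have hD : HasDerivAt (fun s =>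
          m1 (x.1 - 1 + -s) * (1 + s) + (m (x.1 - 1 + -s) - m1 (x.1 - 1 + -s)))
          (-(x.2 * m2 w)) x.2 := by
        have h1 := ((H4 hm2 x.1 x.2).mul
          ((hasDerivAt_const x.2 (1 : ℝ)).add (hasDerivAt_id' x.2))).add
          ((H4 hm1 x.1 x.2).sub (H4 hm2 x.1 x.2))
        refine h1.congr_deriv ?_
        rw [hw]; simp only [Pi.add_apply]; ring
      exact hD.deriv
    rw [SolvesStrangeEq, hp11, hp22, hp12]
    ring
  · -- 0 < x.2
    set v := x.1 - 1 + x.2 with hv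
    have hinner : ∀ s : ℝ, 0 < s → (fun u => Vf f m (u, s)) =
        fun u => m (u - 1 + s) * (1 - s) + f (u - 1 + s) := by
      intro s hs
      funext u
      simp only [Vf, vL, abs_of_pos hs]
      rw [show u - (u - 1 + s) = 1 - s by ring]
    have hp11 : p11 (Vf f m) x = m2 v * (1 - x.2) + (m1 v - m2 v) := by
      rw [p11]
      have hQ : (fun s => deriv (fun u => Vf f m (u, x.2)) s) = fun s =>
          m1 (s - 1 + x.2) * (1 - x.2) + (m (s - 1 + x.2) - m1 (s - 1 + x.2)) := by
        funext s
        rw [hinner x.2 hx2]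
        exact (((H1 hm1 x.2 s).mul_const (1 - x.2)).add (H1 hfd x.2 s)).deriv
      rw [hQ]
      exact (((H1 hm2 x.2 x.1).mul_const (1 - x.2)).add
        ((H1 hm1 x.2 x.1).sub (H1 hm2 x.2 x.1))).deriv
    have hp22 : p22 (Vf f m) x = -(m1 v + x.2 * m2 v) := by
      rw [p22]
      have hev : (fun s => deriv (fun u => Vf f m (x.1, u)) s) =ᶠ[nhds x.2]
          fun s => -(s * m1 (x.1 - 1 + s)) := by
        filter_upwards [isOpen_Ioi.eventually_mem hx2] with s hs
        have hloc : (fun u => Vf f m (x.1, u)) =ᶠ[nhds s]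
            fun u => m (x.1 - 1 + u) * (1 - u) + f (x.1 - 1 + u) := by
          filter_upwards [isOpen_Ioi.eventually_mem hs] with u hu
          simp only [Vf, vL, abs_of_pos (mem_Ioi.mp hu)]
          rw [show x.1 - (x.1 - 1 + u) = 1 - u by ring]
        rw [hloc.deriv_eq]
        have hN : HasDerivAt (fun u => m (x.1 - 1 + u) * (1 - u) + f (x.1 - 1 + u))
            (-(s * m1 (x.1 - 1 + s))) s := by
          have h1 := (H2 hm1 x.1 s).mul ((hasDerivAt_const s (1 : ℝ)).sub (hasDerivAt_id' s))
          have h2 := H2 hfd x.1 s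
          have h3 := h1.add h2
          refine h3.congr_deriv ?_
          simp only [Pi.sub_apply]
          ring
        exact hN.deriv
      rw [hev.deriv_eq]
      have hD : HasDerivAt (fun s => -(s * m1 (x.1 - 1 + s))) (-(m1 v + x.2 * m2 v)) x.2 := by
        have h1 := ((hasDerivAt_id' x.2).mul (H2 hm2 x.1 x.2)).neg
        refine h1.congr_deriv ?_
        rw [hv]; ring
      exact hD.deriv
    have hp12 : p12 (Vf f m) x = -(x.2 * m2 v) := by
      rw [p12]
      have hev : (fun s => deriv (fun u => Vf f m (u, s)) x.1) =ᶠ[nhds x.2]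
          fun s => m1 (x.1 - 1 + s) * (1 - s) + (m (x.1 - 1 + s) - m1 (x.1 - 1 + s)) := by
        filter_upwards [isOpen_Ioi.eventually_mem hx2] with s hs
        rw [hinner s hs]
        exact (((H1 hm1 s x.1).mul_const (1 - s)).add (H1 hfd s x.1)).deriv
      rw [hev.deriv_eq]
      have hD : HasDerivAt (fun s =>
          m1 (x.1 - 1 + s) * (1 - s) + (m (x.1 - 1 + s) - m1 (x.1 - 1 + s)))
          (-(x.2 * m2 v)) x.2 := by
        have h1 := ((H2 hm2 x.1 x.2).mul
          ((hasDerivAt_const x.2 (1 : ℝ)).sub (hasDerivAt_id' x.2))).add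
          ((H2 hm1 x.1 x.2).sub (H2 hm2 x.1 x.2))
        refine h1.congr_deriv ?_
        rw [hv]; simp only [Pi.sub_apply]; ring
      exact hD.deriv
    rw [SolvesStrangeEq, hp11, hp22, hp12]
    ring

end St12

/-- infinite left tangent domain. -/
theorem statement12 (f m : ℝ → ℝ) (v₁ : ℝ) (hf : ContDiff ℝ 2 f)
    (hint : ∀ u : ℝ, IntegrableOn (fun t => deriv f t * Real.exp (-t)) (Set.Ici u))
    (hm : ∀ u : ℝ, m u = Real.exp u * ∫ t in Set.Ici u, deriv f t * Real.exp (-t))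
    (hcc : ∀ v : ℝ, v₁ < v → 0 ≤ deriv (deriv m) v) :
    ContDiffOn ℝ 1 (fun x : ℝ × ℝ => m (vL x) * (x.1 - vL x) + f (vL x))
      (SigmaLge v₁) ∧
    DiagConcaveOn (fun x : ℝ × ℝ => m (vL x) * (x.1 - vL x) + f (vL x))
      (SigmaLge v₁) ∧
    ∀ x ∈ interior (SigmaLge v₁), x.2 ≠ 0 →
      SolvesStrangeEq (fun x : ℝ × ℝ => m (vL x) * (x.1 - vL x) + f (vL x)) x := by
  have hf2 : ContDiff ℝ (1 + 1) f := by
    convert hf using 2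
    norm_num
  obtain ⟨hfdiff, -, hfc1⟩ := contDiff_succ_iff_deriv.mp hf2
  have hdfc : Continuous (deriv f) := hfc1.continuous
  obtain ⟨hdfd, hdf2c⟩ := contDiff_one_iff_deriv.mp hfc1
  set m1 : ℝ → ℝ := fun u => m u - deriv f u with hm1def
  set m2 : ℝ → ℝ := fun u => m1 u - deriv (deriv f) u with hm2def
  have hm1 : ∀ u, HasDerivAt m (m1 u) u := fun u => St12.hasDerivAt_m hdfc hint hm u
  have hfd : ∀ u, HasDerivAt f (m u - m1 u) u := by
    intro u
    have h := (hfdiff u).hasDerivAt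
    refine h.congr_deriv ?_
    rw [hm1def]; ring
  have hm2 : ∀ u, HasDerivAt m1 (m2 u) u := fun u => (hm1 u).sub ((hdfd u).hasDerivAt)
  have hmc : Continuous m := Differentiable.continuous fun u => (hm1 u).differentiableAt
  have hm1c : Continuous m1 := hmc.sub hdfc
  have hm2c : Continuous m2 := hm1c.sub hdf2c
  have hcc2 : ∀ v, v₁ < v → 0 ≤ m2 v := by
    intro v hv
    have h1 : deriv m = m1 := funext fun u => (hm1 u).deriv
    have h2 : deriv m1 v = m2 v := (hm2 v).deriv
    have h3 := hcc v hv
    rwa [h1, h2] at h3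
  have hVf : (fun x : ℝ × ℝ => m (vL x) * (x.1 - vL x) + f (vL x)) = St12.Vf f m := rfl
  rw [hVf]
  refine ⟨(St12.contDiff_Vf hm1 hfd hm1c).contDiffOn, ⟨?_, ?_⟩, ?_⟩
  · intro x _
    exact St12.concave_line1 hm1 hm2 hfd hm2c hcc2 x
  · intro x _
    exact St12.concave_lineNeg hm1 hm2 hfd hm2c hcc2 x
  · intro x _ hx2
    exact St12.strange_eq hm1 hm2 hfd x hx2

end
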